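/- arXiv:1311.0341 — 6 statements merged into one kernel-verified Lean document; each statement's English description precedes it below -/
import Mathlib

section
/- For all 3×3 complex matrices X and Y, and all indices a,b ∈ {1,2,3}, one has (1/2)·X_c^m Y_d^n ε_{amn} ε^{bcd} = (X*Y)_a^b, where repeated indices c,d,m,n are summed. (This expresses the Freudenthal product as a double Levi-Civita contraction.) -/
open Matrix BigOperators

/-- 3×3 complex matrices. -/
abbrev Mat3 := Matrix (Fin 3) (Fin 3) ℂ

/-- Sign of an integer, valued in ℤ. -/
def sgnZ (n : ℤ) : ℤ := if 0 < n then 1 else if n < 0 then -1 else 0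

/-- The Levi-Civita symbol on `Fin 3`. -/
def eps (a b c : Fin 3) : ℤ :=
  sgnZ ((b : ℤ) - (a : ℤ)) * sgnZ ((c : ℤ) - (a : ℤ)) * sgnZ ((c : ℤ) - (b : ℤ))

/-- The Jordan product X∘Y = (XY+YX)/2. -/
noncomputable def jord (X Y : Mat3) : Mat3 := (1/2 : ℂ) • (X * Y + Y * X)

/-- The Freudenthal product
X*Y = X∘Y − (1/2)((tr X)Y + (tr Y)X) + (1/2)((tr X)(tr Y) − tr(X∘Y))·I. -/
noncomputable def freud (X Y : Mat3) : Mat3 :=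
  jord X Y - (1/2 : ℂ) • (X.trace • Y + Y.trace • X)
    + (1/2 : ℂ) • (X.trace * Y.trace - (jord X Y).trace) • (1 : Mat3)

/-!
The product of two Levi-Civita symbols is the determinant of Kronecker deltas,
`ε_{amn} ε_{bcd} = det [[δ_ab, δ_ac, δ_ad], [δ_mb, δ_mc, δ_md], [δ_nb, δ_nc, δ_nd]]`.
Contracting its six terms against `X_cm Y_dn` gives
`δ_ab (tr X tr Y - tr XY) - (tr Y) X_ab - (tr X) Y_ab + (XY)_ab + (YX)_ab`,
which is twice `(X*Y)_ab` because `tr (X∘Y) = tr (XY)`.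
-/

local notation "δ" => (1 : Matrix (Fin 3) (Fin 3) ℤ)

theorem eps_mul_eps (a m n b c d : Fin 3) :
    eps a m n * eps b c d =
      δ a b * (δ m c * δ n d - δ m d * δ n c) - δ a c * (δ m b * δ n d - δ m d * δ n b)
        + δ a d * (δ m b * δ n c - δ m c * δ n b) := by
  revert a m n b c d
  decide

theorem sum_mul_mul_eps_mul_eps (X Y : Mat3) (a b : Fin 3) :
    ∑ c, ∑ d, ∑ m, ∑ n, X c m * Y d n * ((eps a m n : ℤ) : ℂ) * ((eps b c d : ℤ) : ℂ)
      = (X.trace * Y.trace - (X * Y).trace) * (1 : Mat3) a b - X a b * Y.trace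
        + (X * Y) a b + (Y * X) a b - X.trace * Y a b := by
  simp only [mul_assoc _ _ ((eps b _ _ : ℤ) : ℂ), ← Int.cast_mul, eps_mul_eps]
  simp only [Int.cast_add, Int.cast_sub, Int.cast_mul, Matrix.one_apply, Int.cast_ite,
    Int.cast_one, Int.cast_zero, mul_add, mul_sub, Finset.sum_add_distrib, Finset.sum_sub_distrib]
  simp only [Matrix.trace, Matrix.diag, Matrix.mul_apply, Finset.sum_mul_sum]
  simp only [mul_ite, mul_one, mul_zero, Finset.sum_ite_eq', Finset.mem_univ, ↓reduceIte, Finset.sum_ite_irrel,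
    Finset.sum_const_zero, Finset.sum_ite_eq, Finset.mul_sum, mul_comm (Y _ _), Finset.sum_mul]
  split_ifs <;> ring

theorem trace_jord (X Y : Mat3) : (jord X Y).trace = (X * Y).trace := by
  rw [jord, trace_smul, trace_add, trace_mul_comm Y X]
  ring

/-- (1/2)·X_c^m Y_d^n ε_{amn} ε^{bcd} = (X*Y)_a^b. -/
theorem stmt1 (X Y : Mat3) (a b : Fin 3) :
    (1/2 : ℂ) * ∑ c, ∑ d, ∑ m, ∑ n,
        X c m * Y d n * ((eps a m n : ℤ) : ℂ) * ((eps b c d : ℤ) : ℂ)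
      = freud X Y a b := by
  rw [sum_mul_mul_eps_mul_eps, freud, trace_jord]
  simp only [jord, smul_add, Matrix.add_apply, Matrix.sub_apply, Matrix.smul_apply, smul_eq_mul]
  ring
end

section
/- For all 3×3 complex matrices X and Y, and all indices a,b,c ∈ {1,2,3}, the cubie of the Freudenthal product satisfies (*(X*Y))_{abc} = (1/2)·(X_b^m Y_c^n − X_c^m Y_b^n)·ε_{amn}, where m,n are summed. -/
open Matrix BigOperators

/-- The cubie of a 3×3 matrix: (*X)_{abc} = X_a^m ε_{mbc}. -/
noncomputable def cubie (X : Mat3) (a b c : Fin 3) : ℂ :=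
  ∑ m, X a m * ((eps m b c : ℤ) : ℂ)

/-!
By Cayley–Hamilton, `freud X X` is the adjugate of `X`, so `freud X Y` is the polarization of the
adjugate. The cubie `(*Z)_{abc}` is the `a`-th entry of `Z (e_b × e_c)`, while
`ε_{amn} u^m v^n = (u × v)_a`; the theorem is therefore the polarization of the cofactor identity
`adj M (u × v) = Mᵀu × Mᵀv`, evaluated at `u = e_b`, `v = e_c`.
-/

section

variable {R : Type*} [CommRing R]

theorem sum_sum_mul_mul_eps_eq_cross (u v : Fin 3 → R) (a : Fin 3) :
    ∑ m, ∑ n, u m * v n * (eps a m n : R) = (u ⨯₃ v) a := by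
  fin_cases a <;>
    simp only [Fin.sum_univ_three, cross_apply, eps, sgnZ, Fin.isValue, Fin.zero_eta, Fin.mk_one,
      Fin.reduceFinMk, cons_val_zero, cons_val_one, cons_val, Fin.val_zero, Fin.val_one,
      Fin.val_two, Nat.cast_zero, Nat.cast_one, Nat.cast_ofNat, Int.reduceSub, Int.reduceLT,
      ↓reduceIte, Int.reduceNeg, Int.cast_one, Int.cast_neg, Int.cast_zero, mul_one, mul_zero,
      mul_neg] <;> ring

theorem cross_single_single_apply (b c m : Fin 3) :
    (Pi.single b (1 : R) ⨯₃ Pi.single c 1) m = eps m b c := by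
  rw [← sum_sum_mul_mul_eps_eq_cross]
  simp [Pi.single_apply]

theorem adjugate_mulVec_cross (M : Matrix (Fin 3) (Fin 3) R) (u v : Fin 3 → R) :
    M.adjugate *ᵥ (u ⨯₃ v) = (Mᵀ *ᵥ u) ⨯₃ (Mᵀ *ᵥ v) := by
  ext i
  fin_cases i <;>
    simp only [adjugate_fin_three, cross_apply, mulVec, dotProduct, Fin.sum_univ_three, of_apply,
      transpose_apply, cons_val', cons_val_fin_one, cons_val_zero, cons_val_one, cons_val,
      Fin.isValue, Fin.zero_eta, Fin.mk_one, Fin.reduceFinMk] <;> ring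

end

theorem freud_self_eq_adjugate (X : Mat3) : freud X X = X.adjugate := by
  ext i j
  fin_cases i <;> fin_cases j <;>
    simp only [freud, jord, adjugate_fin_three, trace_fin_three, mul_apply, Fin.sum_univ_three,
      trace_add, trace_smul, smul_eq_mul, Matrix.add_apply, Matrix.sub_apply, Matrix.smul_apply,
      one_apply, of_apply, cons_val', cons_val_fin_one, cons_val_zero, cons_val_one, cons_val,
      Fin.isValue, Fin.zero_eta, Fin.mk_one, Fin.reduceFinMk, Fin.reduceEq, ↓reduceIte] <;> ring

theorem freud_add_add (X Y : Mat3) :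
    freud (X + Y) (X + Y) = freud X X + (2 : ℂ) • freud X Y + freud Y Y := by
  simp only [freud, jord, trace_add, trace_smul, add_mul, mul_add, smul_add, add_smul, smul_eq_mul]
  module

theorem freud_mulVec_cross (X Y : Mat3) (u v : Fin 3 → ℂ) :
    freud X Y *ᵥ (u ⨯₃ v) =
      (1 / 2 : ℂ) • ((Xᵀ *ᵥ u) ⨯₃ (Yᵀ *ᵥ v) + (Yᵀ *ᵥ u) ⨯₃ (Xᵀ *ᵥ v)) := by
  have h := congrArg (· *ᵥ (u ⨯₃ v)) (freud_add_add X Y)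
  simp only [freud_self_eq_adjugate, adjugate_mulVec_cross, add_mulVec, smul_mulVec, transpose_add,
    map_add, LinearMap.add_apply] at h
  linear_combination (norm := module) (-1 / 2 : ℂ) • h

theorem cubie_eq_mulVec_cross (Z : Mat3) (a b c : Fin 3) :
    cubie Z a b c = (Z *ᵥ (Pi.single b 1 ⨯₃ Pi.single c 1)) a := by
  simp only [cubie, mulVec, dotProduct, cross_single_single_apply]

/-- (*(X*Y))_{abc} = (1/2)·(X_b^m Y_c^n − X_c^m Y_b^n)·ε_{amn}. -/
theorem stmt2 (X Y : Mat3) (a b c : Fin 3) :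
    cubie (freud X Y) a b c
      = (1/2 : ℂ) * ∑ m, ∑ n, (X b m * Y c n - X c m * Y b n) * ((eps a m n : ℤ) : ℂ) := by
  have row (M : Mat3) (i : Fin 3) : Mᵀ *ᵥ Pi.single i 1 = M i := by
    ext j; simp
  simp only [cubie_eq_mulVec_cross, freud_mulVec_cross, row, sub_mul, Finset.sum_sub_distrib,
    sum_sum_mul_mul_eps_eq_cross, ← cross_anticomm (X c), Pi.smul_apply, Pi.add_apply,
    Pi.neg_apply, smul_eq_mul]
  ring
end

section
/- Let φ be a traceless 3×3 complex matrix and set φ' = −φ†, where † denotes conjugate transpose. Then for every 3×3 complex matrix X, the cubie of φX + Xφ† is given by (*(φX + Xφ†))_{abc} = φ_a^m (*X)_{mbc} + X_a^n φ'_b^m ε_{nmc} + X_a^n φ'_c^m ε_{nbm}, where repeated indices m,n ∈ {1,2,3} are summed. (This is the complex case of the action of e₆ on cubies.) -/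
open Matrix BigOperators

/-! The cubie is linear in its matrix from the left: *(φX) = φ·(*X) and *(Xφ†) = X·(*φ†).
The rest is the infinitesimal form of `A_a^m A_b^n A_c^p ε_{mnp} = det A · ε_{abc}`, namely
`A_a^m ε_{mbc} + A_b^m ε_{amc} + A_c^m ε_{abm} = tr A · ε_{abc}`. As tr φ† = conj (tr φ) = 0,
φ† acting on the first slot of ε is minus its action on the other two. -/

theorem trace_mul_eps {R : Type*} [CommRing R] (A : Matrix (Fin 3) (Fin 3) R) (a b c : Fin 3) :
    A.trace * eps a b c
      = ∑ m, A a m * eps m b c + ∑ m, A b m * eps a m c + ∑ m, A c m * eps a b m := by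
  fin_cases a <;> fin_cases b <;> fin_cases c <;>
    simp [Fin.sum_univ_three, trace, eps, sgnZ] <;> ring

theorem cubie_add (A B : Mat3) (a b c : Fin 3) :
    cubie (A + B) a b c = cubie A a b c + cubie B a b c := by
  simp only [cubie, Matrix.add_apply, add_mul, Finset.sum_add_distrib]

theorem cubie_mul (A B : Mat3) (a b c : Fin 3) :
    cubie (A * B) a b c = ∑ n, A a n * cubie B n b c := by
  simp only [cubie, mul_apply, Finset.sum_mul, Finset.mul_sum, mul_assoc]
  exact Finset.sum_comm

theorem cubie_of_trace_eq_zero {A : Mat3} (hA : A.trace = 0) (n b c : Fin 3) :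
    cubie A n b c = ∑ m, (-A) b m * eps n m c + ∑ m, (-A) c m * eps n b m := by
  have h := trace_mul_eps A n b c
  rw [hA, zero_mul] at h
  simp only [cubie, Matrix.neg_apply, neg_mul, Finset.sum_neg_distrib]
  linear_combination -h

/-- for φ traceless and φ' = −φ†, the cubie of φX + Xφ† is
(*(φX + Xφ†))_{abc} = φ_a^m (*X)_{mbc} + X_a^n φ'_b^m ε_{nmc} + X_a^n φ'_c^m ε_{nbm}. -/
theorem stmt3 (φ : Mat3) (hφ : φ.trace = 0) (X : Mat3) (a b c : Fin 3) :
    cubie (φ * X + X * φᴴ) a b c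
      = (∑ m, φ a m * cubie X m b c)
        + (∑ n, ∑ m, X a n * (-φᴴ) b m * ((eps n m c : ℤ) : ℂ))
        + (∑ n, ∑ m, X a n * (-φᴴ) c m * ((eps n b m : ℤ) : ℂ)) := by
  have hφH : φᴴ.trace = 0 := by rw [trace_conjTranspose, hφ, star_zero]
  simp only [cubie_add, cubie_mul, cubie_of_trace_eq_zero hφH, mul_add, Finset.mul_sum, mul_assoc,
    Finset.sum_add_distrib, add_assoc]
end

section
/- For all 3×3 complex matrices A, B, X, the identity −(A∘B)*X = (B − tr(B)·I)∘(A*X) + A*(B∘X) holds, where ∘ is the Jordan product and * is the Freudenthal product. -/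
/-!
Expanding both sides by linearity and cyclicity of the trace, the difference of the two sides
is `-½ P(A, B, X)`, where `P` is the full polarization of the Cayley–Hamilton polynomial of a
`3 × 3` matrix, which vanishes identically just as Cayley–Hamilton does.
-/

open Matrix BigOperators

namespace Matrix

variable {n R : Type*} [Fintype n] [DecidableEq n] [CommRing R]

/-- `P(X, X, X) = 6 X³ - 6 (tr X) X² + 3 ((tr X)² - tr X²) X - ((tr X)³ - 3 tr X tr X² + 2 tr X³)`,
which for `3 × 3` matrices is `6` times the Cayley–Hamilton polynomial evaluated at `X`. -/
def polarizedCayleyHamilton (X Y Z : Matrix n n R) : Matrix n n R :=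
  (X * Y * Z + X * Z * Y + Y * X * Z + Y * Z * X + Z * X * Y + Z * Y * X)
    - (X.trace • (Y * Z + Z * Y) + Y.trace • (X * Z + Z * X) + Z.trace • (X * Y + Y * X))
    + ((Y.trace * Z.trace - (Y * Z).trace) • X + (X.trace * Z.trace - (X * Z).trace) • Y
      + (X.trace * Y.trace - (X * Y).trace) • Z)
    - (X.trace * Y.trace * Z.trace - X.trace * (Y * Z).trace - Y.trace * (X * Z).trace
      - Z.trace * (X * Y).trace + (X * Y * Z).trace + (X * Z * Y).trace) • (1 : Matrix n n R)

theorem polarizedCayleyHamilton_fin_three_eq_zero (X Y Z : Matrix (Fin 3) (Fin 3) R) :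
    polarizedCayleyHamilton X Y Z = 0 := by
  ext i j
  fin_cases i <;> fin_cases j <;>
  · simp only [polarizedCayleyHamilton, sub_apply, add_apply, smul_apply, smul_eq_mul, mul_apply,
      Fin.sum_univ_three, trace_fin_three, one_apply_eq, one_apply_ne, zero_apply, ne_eq,
      Fin.reduceEq, not_false_eq_true, Fin.isValue, Fin.reduceFinMk, Fin.mk_one, Fin.zero_eta]
    ring

end Matrix

theorem jord_sub_trace_freud_add_freud_jord (A B X : Mat3) :
    jord (B - B.trace • (1 : Mat3)) (freud A X) + freud A (jord B X)
      = -freud (jord A B) X + (1/2 : ℂ) • polarizedCayleyHamilton A B X := by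
  simp only [jord, freud, polarizedCayleyHamilton, trace_add, trace_smul, mul_add, add_mul,
    mul_sub, sub_mul, smul_mul_assoc, mul_smul_comm, smul_add, smul_sub, smul_eq_mul, ← mul_assoc,
    one_mul, mul_one, trace_mul_comm B A, trace_mul_comm X A, trace_mul_comm X B,
    trace_mul_cycle B X A, ← trace_mul_cycle A B X, trace_mul_cycle X B A, ← trace_mul_cycle A X B]
  module

/-- −(A∘B)*X = (B − tr(B)·I)∘(A*X) + A*(B∘X). -/
theorem stmt9 (A B X : Mat3) :
    -(freud (jord A B) X)
      = jord (B - B.trace • (1 : Mat3)) (freud A X) + freud A (jord B X) := by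
  rw [jord_sub_trace_freud_add_freud_jord, polarizedCayleyHamilton_fin_three_eq_zero, smul_zero,
    add_zero]
end

section
/- The real Lie algebra so(3,2) = {M ∈ M₅(ℝ) : Mᵀη + ηM = 0}, where η = diag(1,1,1,−1,−1), is isomorphic as a Lie algebra over ℝ to the real symplectic Lie algebra sp(4,ℝ) = {M ∈ M₄(ℝ) : MᵀΩ + ΩM = 0}, where Ω = [[0, I₂],[−I₂, 0]] in 2×2 block form. -/
/-! `sp(4,ℝ)` acts on `Λ²ℝ⁴`, preserving the pairing `(α, β) ↦ α ∧ β ∈ Λ⁴ℝ⁴ ≅ ℝ` of split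
signature `(3,3)` and fixing the symplectic bivector `ω`; so it acts on the 5-dimensional
`ω^⊥`, where the pairing has signature `(3,2)` up to sign. In a suitable orthonormal basis of
`ω^⊥` this representation is `toSo32` below. Both algebras are parametrised by ten free entries, in
which `toSo32` has the explicit inverse `toSp4`, and bracket compatibility becomes a polynomial
identity in those entries. -/

open Matrix BigOperators

/-- η = diag(1,1,1,−1,−1), the symmetric bilinear form of signature (3,2). -/
def eta5 : Matrix (Fin 5) (Fin 5) ℝ := Matrix.diagonal ![1, 1, 1, -1, -1]

/-- Ω = [[0, I₂],[−I₂, 0]], the standard 4×4 symplectic form. -/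
def Omega4 : Matrix (Fin 4) (Fin 4) ℝ :=
  Matrix.reindex (finSumFinEquiv : Fin 2 ⊕ Fin 2 ≃ Fin 4)
    (finSumFinEquiv : Fin 2 ⊕ Fin 2 ≃ Fin 4)
    (Matrix.fromBlocks (0 : Matrix (Fin 2) (Fin 2) ℝ) 1 (-1) 0)

local notation "𝔰𝔭₄" => skewAdjointMatricesLieSubalgebra Omega4
local notation "𝔰𝔬₃₂" => skewAdjointMatricesLieSubalgebra eta5

lemma Omega4_eq : Omega4 = !![0, 0, 1, 0; 0, 0, 0, 1; -1, 0, 0, 0; 0, -1, 0, 0] := by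
  ext i j
  fin_cases i <;> fin_cases j <;>
    simp [Omega4, finSumFinEquiv, Fin.addCases, Fin.subNat, one_apply]

lemma eta5_eq : eta5 = !![1, 0, 0, 0, 0; 0, 1, 0, 0, 0; 0, 0, 1, 0, 0;
    0, 0, 0, -1, 0; 0, 0, 0, 0, -1] := by
  ext i j
  fin_cases i <;> fin_cases j <;> rfl

/-- The block matrix `[[A, B], [C, -Aᵀ]]` with `B`, `C` symmetric. -/
def sp4Matrix (a₀₀ a₀₁ a₁₀ a₁₁ b₀₀ b₀₁ b₁₁ c₀₀ c₀₁ c₁₁ : ℝ) : Matrix (Fin 4) (Fin 4) ℝ :=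
  !![a₀₀, a₀₁, b₀₀, b₀₁; a₁₀, a₁₁, b₀₁, b₁₁; c₀₀, c₀₁, -a₀₀, -a₁₀; c₀₁, c₁₁, -a₀₁, -a₁₁]

def so32Matrix (p q r s t u v w x y : ℝ) : Matrix (Fin 5) (Fin 5) ℝ :=
  !![0, p, q, r, s; -p, 0, t, u, v; -q, -t, 0, w, x; r, u, w, 0, y; s, v, x, -y, 0]

lemma mem_sp4_iff {M : Matrix (Fin 4) (Fin 4) ℝ} :
    M ∈ 𝔰𝔭₄ ↔ M = sp4Matrix (M 0 0) (M 0 1) (M 1 0) (M 1 1) (M 0 2) (M 0 3) (M 1 3)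
      (M 2 0) (M 2 1) (M 3 1) := by
  rw [mem_skewAdjointMatricesLieSubalgebra, mem_skewAdjointMatricesSubmodule,
    Matrix.IsSkewAdjoint, Matrix.IsAdjointPair, Omega4_eq, ← Matrix.ext_iff, ← Matrix.ext_iff]
  simp only [mul_apply, transpose_apply, of_apply, cons_val', cons_val_fin_one, Fin.sum_univ_succ,
    Fin.isValue, cons_val_zero, cons_val_succ, Fin.succ_zero_eq_one, Fin.succ_one_eq_two,
    Finset.univ_unique, Fin.default_eq_zero, Finset.sum_singleton, Fin.reduceSucc,
    Matrix.neg_apply, mul_neg, Finset.sum_neg_distrib, neg_add_rev, Fin.forall_fin_succ, mul_zero,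
    mul_one, add_zero, zero_add, IsEmpty.forall_iff, and_true, zero_mul, neg_zero, one_mul,
    neg_inj, true_and, neg_mul, neg_neg, sp4Matrix, and_self]
  grind

lemma mem_so32_iff {N : Matrix (Fin 5) (Fin 5) ℝ} :
    N ∈ 𝔰𝔬₃₂ ↔ N = so32Matrix (N 0 1) (N 0 2) (N 0 3) (N 0 4) (N 1 2) (N 1 3) (N 1 4)
      (N 2 3) (N 2 4) (N 3 4) := by
  rw [mem_skewAdjointMatricesLieSubalgebra, mem_skewAdjointMatricesSubmodule,
    Matrix.IsSkewAdjoint, Matrix.IsAdjointPair, eta5_eq, ← Matrix.ext_iff, ← Matrix.ext_iff]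
  simp only [mul_apply, transpose_apply, of_apply, cons_val', cons_val_fin_one, Fin.sum_univ_succ,
    Fin.isValue, cons_val_zero, cons_val_succ, Fin.succ_zero_eq_one, Fin.succ_one_eq_two,
    Fin.reduceSucc, Finset.univ_unique, Fin.default_eq_zero, Finset.sum_singleton,
    Matrix.neg_apply, mul_neg, Finset.sum_neg_distrib, neg_add_rev, Fin.forall_fin_succ, mul_one,
    mul_zero, add_zero, zero_add, IsEmpty.forall_iff, and_true, zero_mul, neg_zero, one_mul,
    neg_inj, neg_mul, neg_neg, so32Matrix, and_self]
  grind

lemma sp4Matrix_mem (a₀₀ a₀₁ a₁₀ a₁₁ b₀₀ b₀₁ b₁₁ c₀₀ c₀₁ c₁₁ : ℝ) :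
    sp4Matrix a₀₀ a₀₁ a₁₀ a₁₁ b₀₀ b₀₁ b₁₁ c₀₀ c₀₁ c₁₁ ∈ 𝔰𝔭₄ := by
  rw [mem_sp4_iff]
  simp [sp4Matrix]

lemma so32Matrix_mem (p q r s t u v w x y : ℝ) : so32Matrix p q r s t u v w x y ∈ 𝔰𝔬₃₂ := by
  rw [mem_so32_iff]
  simp [so32Matrix]

lemma so32_ext {N N' : Matrix (Fin 5) (Fin 5) ℝ} (hN : N ∈ 𝔰𝔬₃₂) (hN' : N' ∈ 𝔰𝔬₃₂)
    (h₀₁ : N 0 1 = N' 0 1) (h₀₂ : N 0 2 = N' 0 2) (h₀₃ : N 0 3 = N' 0 3) (h₀₄ : N 0 4 = N' 0 4)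
    (h₁₂ : N 1 2 = N' 1 2) (h₁₃ : N 1 3 = N' 1 3) (h₁₄ : N 1 4 = N' 1 4) (h₂₃ : N 2 3 = N' 2 3)
    (h₂₄ : N 2 4 = N' 2 4) (h₃₄ : N 3 4 = N' 3 4) : N = N' := by
  rw [mem_so32_iff.1 hN, mem_so32_iff.1 hN', h₀₁, h₀₂, h₀₃, h₀₄, h₁₂, h₁₃, h₁₄, h₂₃, h₂₄, h₃₄]

noncomputable def toSo32 : Matrix (Fin 4) (Fin 4) ℝ →ₗ[ℝ] Matrix (Fin 5) (Fin 5) ℝ where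
  toFun M := so32Matrix ((-M 0 2 + M 1 3 + M 2 0 - M 3 1) / 2) (M 0 3 - M 2 1) (M 0 0 + M 1 1)
    ((M 0 2 + M 1 3 + M 2 0 + M 3 1) / 2) (M 1 0 - M 0 1) ((-M 0 2 + M 1 3 - M 2 0 + M 3 1) / 2)
    (M 0 0 - M 1 1) (M 0 3 + M 2 1) (-M 0 1 - M 1 0) ((M 0 2 + M 1 3 - M 2 0 - M 3 1) / 2)
  map_add' M M' := by
    ext i j
    fin_cases i <;> fin_cases j <;> simp [so32Matrix] <;> ring
  map_smul' c M := by
    ext i j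
    fin_cases i <;> fin_cases j <;> simp [so32Matrix] <;> ring

noncomputable def toSp4 (N : Matrix (Fin 5) (Fin 5) ℝ) : Matrix (Fin 4) (Fin 4) ℝ :=
  sp4Matrix ((N 0 3 + N 1 4) / 2) ((-N 1 2 - N 2 4) / 2) ((N 1 2 - N 2 4) / 2)
    ((N 0 3 - N 1 4) / 2) ((N 0 4 + N 3 4 - N 0 1 - N 1 3) / 2) ((N 0 2 + N 2 3) / 2)
    ((N 0 4 + N 3 4 + N 0 1 + N 1 3) / 2) ((N 0 4 - N 3 4 + N 0 1 - N 1 3) / 2)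
    ((N 2 3 - N 0 2) / 2) ((N 0 4 - N 3 4 - N 0 1 + N 1 3) / 2)

lemma toSo32_mem (M : Matrix (Fin 4) (Fin 4) ℝ) : toSo32 M ∈ 𝔰𝔬₃₂ :=
  so32Matrix_mem ..

lemma toSp4_mem (N : Matrix (Fin 5) (Fin 5) ℝ) : toSp4 N ∈ 𝔰𝔭₄ :=
  sp4Matrix_mem ..

lemma toSp4_toSo32 {M : Matrix (Fin 4) (Fin 4) ℝ} (hM : M ∈ 𝔰𝔭₄) : toSp4 (toSo32 M) = M := by
  conv_rhs => rw [mem_sp4_iff.1 hM]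
  ext i j
  fin_cases i <;> fin_cases j <;> simp [toSp4, toSo32, sp4Matrix, so32Matrix] <;> ring

lemma toSo32_toSp4 {N : Matrix (Fin 5) (Fin 5) ℝ} (hN : N ∈ 𝔰𝔬₃₂) : toSo32 (toSp4 N) = N := by
  refine so32_ext (toSo32_mem _) hN ?_ ?_ ?_ ?_ ?_ ?_ ?_ ?_ ?_ ?_ <;>
    simp [toSp4, toSo32, sp4Matrix, so32Matrix] <;> ring

lemma toSo32_lie {M₁ M₂ : Matrix (Fin 4) (Fin 4) ℝ} (h₁ : M₁ ∈ 𝔰𝔭₄) (h₂ : M₂ ∈ 𝔰𝔭₄) :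
    toSo32 ⁅M₁, M₂⁆ = ⁅toSo32 M₁, toSo32 M₂⁆ := by
  refine so32_ext (toSo32_mem _) (isSkewAdjoint_bracket eta5 (toSo32_mem M₁) (toSo32_mem M₂))
    ?_ ?_ ?_ ?_ ?_ ?_ ?_ ?_ ?_ ?_ <;>
  · rw [mem_sp4_iff.1 h₁, mem_sp4_iff.1 h₂, Ring.lie_def, Ring.lie_def]
    simp only [toSo32, LinearMap.coe_mk, AddHom.coe_mk, so32Matrix, sp4Matrix, Matrix.sub_apply,
      mul_apply, Fin.sum_univ_four, Fin.sum_univ_five, of_apply, cons_val', cons_val,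
      cons_val_zero, cons_val_one, cons_val_fin_one, Fin.isValue]
    ring

noncomputable def sp4EquivSo32 : 𝔰𝔭₄ ≃ₗ⁅ℝ⁆ 𝔰𝔬₃₂ where
  toFun M := ⟨toSo32 M, toSo32_mem M⟩
  map_add' M₁ M₂ := Subtype.ext (toSo32.map_add M₁ M₂)
  map_smul' c M := Subtype.ext (toSo32.map_smul c M)
  map_lie' {M₁ M₂} := Subtype.ext (toSo32_lie M₁.2 M₂.2)
  invFun N := ⟨toSp4 N, toSp4_mem N⟩
  left_inv M := Subtype.ext (toSp4_toSo32 M.2)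
  right_inv N := Subtype.ext (toSo32_toSp4 N.2)

/-- the real Lie algebra so(3,2) = {M ∈ M₅(ℝ) : Mᵀη + ηM = 0} is
isomorphic, as a Lie algebra over ℝ, to sp(4,ℝ) = {M ∈ M₄(ℝ) : MᵀΩ + ΩM = 0}. -/
theorem stmt12 :
    Nonempty ((skewAdjointMatricesLieSubalgebra eta5) ≃ₗ⁅ℝ⁆
      (skewAdjointMatricesLieSubalgebra Omega4)) :=
  ⟨sp4EquivSo32.symm⟩
end

section
/- The real Lie algebra so(4,2) = {M ∈ M₆(ℝ) : Mᵀη + ηM = 0}, where η = diag(1,1,1,1,−1,−1), is isomorphic as a Lie algebra over ℝ to su(2,2) = {M ∈ M₄(ℂ) : tr(M) = 0 and M†H + HM = 0}, where H = diag(1,1,−1,−1) and † is conjugate transpose, regarded as a real Lie algebra under the matrix commutator. -/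
/-!
The isomorphism is the chiral spin representation. Choose `σ₀, …, σ₅ ∈ M₄(ℂ)` with
`σ̄_a = H σ_a† H` and `σ_a σ̄_b + σ_b σ̄_a = σ̄_a σ_b + σ̄_b σ_a = 2 η_ab`. Then
`S(M) = ¼ ∑ (M η)_ab σ_a σ̄_b` is traceless and `H`-skew-Hermitian, and the Clifford relations give
`S(M) σ_c - σ_c S̄(M) = ∑_a M_ac σ_a` (with `S̄` the same sum with `σ` and `σ̄` exchanged),
from which `S ⁅M, N⁆ = ⁅S M, S N⁆` follows.
The inverse reads off coordinates through the trace form: the identity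
`tr (σ_a σ̄_b σ_c σ̄_d) = 4 (η_ab η_cd - η_ac η_bd + η_ad η_bc)` gives
`M_ab = ½ η_aa tr (S(M) σ_b σ̄_a)`, and the Fierz identity
`∑ η_aa η_bb tr (X σ_b σ̄_a) σ_a σ̄_b = 8 X + 4 tr X` shows that every `X ∈ su(2,2)` is some `S(M)`.
-/

open Matrix BigOperators

attribute [local instance 100] LieRing.ofAssociativeRing

/-- η = diag(1,1,1,1,−1,−1), the symmetric bilinear form of signature (4,2). -/
def eta6 : Matrix (Fin 6) (Fin 6) ℝ := Matrix.diagonal ![1, 1, 1, 1, -1, -1]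

/-- H = diag(1,1,−1,−1), the Hermitian form of signature (2,2) on ℂ⁴. -/
def H4 : Matrix (Fin 4) (Fin 4) ℂ := Matrix.diagonal ![1, 1, -1, -1]

lemma H4_mul_H4 : H4 * H4 = 1 := by
  ext i j
  fin_cases i <;> fin_cases j <;>
    simp [H4, Matrix.mul_apply, Fin.sum_univ_four, Matrix.diagonal, Matrix.one_apply]

/-- su(2,2): the real Lie algebra of traceless complex 4×4 matrices M with
M†H + HM = 0, where H = diag(1,1,−1,−1). -/
def su22 : LieSubalgebra ℝ (Matrix (Fin 4) (Fin 4) ℂ) where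
  carrier := {M | M.trace = 0 ∧ Mᴴ * H4 + H4 * M = 0}
  add_mem' := by
    rintro M N ⟨hM1, hM2⟩ ⟨hN1, hN2⟩
    constructor
    · simp [Matrix.trace_add, hM1, hN1]
    · have : (M + N)ᴴ * H4 + H4 * (M + N)
          = (Mᴴ * H4 + H4 * M) + (Nᴴ * H4 + H4 * N) := by
        rw [Matrix.conjTranspose_add]; noncomm_ring
      rw [this, hM2, hN2, add_zero]
  zero_mem' := by simp
  smul_mem' := by
    rintro r M ⟨hM1, hM2⟩
    constructor
    · simp [hM1]
    · have h1 : (r • M)ᴴ = r • Mᴴ := by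
        simp
      rw [h1, Matrix.smul_mul, Matrix.mul_smul, ← smul_add, hM2, smul_zero]
  lie_mem' := by
    rintro M N ⟨hM1, hM2⟩ ⟨hN1, hN2⟩
    have hM3 : Mᴴ * H4 = -(H4 * M) := eq_neg_of_add_eq_zero_left hM2
    have hN3 : Nᴴ * H4 = -(H4 * N) := eq_neg_of_add_eq_zero_left hN2
    constructor
    · simp [Ring.lie_def, Matrix.trace_sub, Matrix.trace_mul_comm M N]
    · show (⁅M, N⁆)ᴴ * H4 + H4 * ⁅M, N⁆ = 0
      rw [Ring.lie_def, Matrix.conjTranspose_sub, Matrix.conjTranspose_mul,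
        Matrix.conjTranspose_mul, Matrix.sub_mul,
        Matrix.mul_assoc Nᴴ Mᴴ H4, Matrix.mul_assoc Mᴴ Nᴴ H4, hM3, hN3,
        Matrix.mul_neg, Matrix.mul_neg, ← Matrix.mul_assoc, ← Matrix.mul_assoc,
        hM3, hN3]
      noncomm_ring


section SpinRepresentation

variable {ι K A : Type*} [Field K] [Ring A] [Algebra K A]

structure IsCliffordPair (B : Matrix ι ι K) (σ σ' : ι → A) : Prop where
  mul_add_mul : ∀ a b, σ a * σ' b + σ b * σ' a = (2 * B a b) • (1 : A)
  mul_add_mul' : ∀ a b, σ' a * σ b + σ' b * σ a = (2 * B a b) • (1 : A)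

namespace IsCliffordPair

variable {B : Matrix ι ι K} {σ σ' : ι → A}

theorem symm (h : IsCliffordPair B σ σ') : IsCliffordPair B σ' σ := ⟨h.2, h.1⟩

theorem mul_mul_mul (h : IsCliffordPair B σ σ') (a b c : ι) :
    σ a * σ' b * σ c = σ c * σ' a * σ b + (2 * B b c) • σ a - (2 * B a c) • σ b := by
  have hbc : σ' b * σ c = (2 * B b c) • 1 - σ' c * σ b := eq_sub_of_add_eq (h.2 b c)
  have hac : σ a * σ' c = (2 * B a c) • 1 - σ c * σ' a := eq_sub_of_add_eq (h.1 a c)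
  rw [mul_assoc, hbc, mul_sub, mul_smul_comm, mul_one, ← mul_assoc, hac, sub_mul, smul_mul_assoc,
    one_mul]
  abel

end IsCliffordPair

variable [Fintype ι]

def spinRep (σ σ' : ι → A) : Matrix ι ι K →ₗ[K] A where
  toFun ω := ∑ a, ∑ b, (ω a b / 4) • (σ a * σ' b)
  map_add' ω ν := by simp only [Matrix.add_apply, add_div, add_smul, Finset.sum_add_distrib]
  map_smul' k ω := by
    simp only [Matrix.smul_apply, smul_eq_mul, mul_div_assoc, mul_smul, Finset.smul_sum,
      RingHom.id_apply]

theorem spinRep_apply (σ σ' : ι → A) (ω : Matrix ι ι K) :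
    spinRep σ σ' ω = ∑ a, ∑ b, (ω a b / 4) • (σ a * σ' b) := rfl

end SpinRepresentation

section Sums

variable {ι K V : Type*} [Fintype ι]

theorem sum_smul_eq_zero_of_transpose_eq_neg [Field K] [NeZero (2 : K)] [AddCommGroup V]
    [Module K V] {ω : Matrix ι ι K} (hω : ωᵀ = -ω) {x : ι → ι → V} (hx : ∀ a b, x a b = x b a) :
    ∑ a, ∑ b, ω a b • x a b = 0 := by
  have h : ∑ a, ∑ b, ω a b • x a b = -∑ a, ∑ b, ω a b • x a b := by
    conv_lhs => rw [Finset.sum_comm]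
    simp only [← Finset.sum_neg_distrib, ← neg_smul]
    refine Finset.sum_congr rfl fun a _ => Finset.sum_congr rfl fun b _ => ?_
    rw [hx, ← Matrix.transpose_apply ω, hω, Matrix.neg_apply]
  have h2 : (2 : K) • ∑ a, ∑ b, ω a b • x a b = 0 := by
    rw [two_smul]; nth_rewrite 2 [h]; exact add_neg_cancel _
  exact (smul_eq_zero.mp h2).resolve_left two_ne_zero

theorem sum_antisymm_mul_pairings [Field K] [NeZero (2 : K)] {B ω : Matrix ι ι K} (hB : Bᵀ = B)
    (hω : ωᵀ = -ω) (a b : ι) :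
    ∑ c, ∑ d, ω c d * (B c d * B b a - B c b * B d a + B c a * B d b) = 2 * (B * ω * B) a b := by
  have hsym : ∀ i j, B i j = B j i := fun i j => by rw [← Matrix.transpose_apply B, hB]
  have hanti : ∀ i j, ω i j = -ω j i := fun i j => by
    rw [← Matrix.transpose_apply ω, hω, Matrix.neg_apply]
  have h1 : ∑ c, ∑ d, ω c d * (B c d * B b a) = 0 :=
    sum_smul_eq_zero_of_transpose_eq_neg hω (x := fun c d => B c d * B b a) fun c d => by
      rw [hsym c d]
  have h2 : ∑ c, ∑ d, ω c d * (B c b * B d a) = -(B * ω * B) a b := by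
    simp only [Matrix.mul_apply, Finset.sum_mul, ← Finset.sum_neg_distrib]
    refine Finset.sum_congr rfl fun c _ => Finset.sum_congr rfl fun d _ => ?_
    rw [hanti d c, hsym d a]; ring
  have h3 : ∑ c, ∑ d, ω c d * (B c a * B d b) = (B * ω * B) a b := by
    simp only [Matrix.mul_apply, Finset.sum_mul]
    rw [Finset.sum_comm]
    refine Finset.sum_congr rfl fun d _ => Finset.sum_congr rfl fun c _ => ?_
    rw [hsym c a]; ring
  simp only [mul_add, mul_sub, Finset.sum_add_distrib, Finset.sum_sub_distrib, h1, h2, h3]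
  ring

variable [CommSemiring K] [AddCommMonoid V] [Module K V]

theorem sum_smul_sum_smul_left (F G : Matrix ι ι K) (x : ι → ι → V) :
    ∑ c, ∑ d, F c d • ∑ a, G a c • x a d = ∑ a, ∑ d, (G * F) a d • x a d := by
  simp only [Finset.smul_sum, smul_smul, Matrix.mul_apply, Finset.sum_smul]
  rw [Finset.sum_congr rfl fun c _ => Finset.sum_comm, Finset.sum_comm]
  refine Finset.sum_congr rfl fun a _ => ?_
  rw [Finset.sum_comm]
  exact Finset.sum_congr rfl fun d _ => Finset.sum_congr rfl fun c _ => by rw [mul_comm]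

theorem sum_smul_sum_smul_right (F G : Matrix ι ι K) (x : ι → ι → V) :
    ∑ c, ∑ d, F c d • ∑ a, G a d • x c a = ∑ c, ∑ a, (F * Gᵀ) c a • x c a := by
  simp only [Finset.smul_sum, smul_smul, Matrix.mul_apply, Finset.sum_smul, Matrix.transpose_apply]
  refine Finset.sum_congr rfl fun c _ => ?_
  rw [Finset.sum_comm]

end Sums

namespace IsCliffordPair

variable {ι K A : Type*} [Fintype ι] [Field K] [NeZero (2 : K)] [Ring A] [Algebra K A]
variable {B : Matrix ι ι K} {σ σ' : ι → A} {ω : Matrix ι ι K}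

theorem spinRep_mul_sub_mul (h : IsCliffordPair B σ σ') (hω : ωᵀ = -ω) (c : ι) :
    spinRep σ σ' ω * σ c - σ c * spinRep σ' σ ω = ∑ a, (ω * B) a c • σ a := by
  have hsplit : spinRep σ σ' ω * σ c - σ c * spinRep σ' σ ω =
      ∑ a, ∑ b, (ω a b / 2 * B b c) • σ a - ∑ a, ∑ b, (ω a b / 2 * B a c) • σ b := by
    simp only [spinRep_apply, Finset.sum_mul, Finset.mul_sum, smul_mul_assoc, mul_smul_comm,
      ← Finset.sum_sub_distrib, ← smul_sub, ← mul_assoc]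
    refine Finset.sum_congr rfl fun a _ => Finset.sum_congr rfl fun b _ => ?_
    rw [h.mul_mul_mul, add_sub_assoc, add_sub_cancel_left, smul_sub, smul_smul, smul_smul]
    have h4 : (4 : K) = 2 * 2 := by norm_num
    have h2 : (2 : K) ≠ 0 := two_ne_zero
    congr 2 <;> rw [h4] <;> field_simp
  have hanti : ∀ a b, ω a b = -ω b a := fun a b => by
    rw [← Matrix.transpose_apply ω, hω, Matrix.neg_apply]
  have hswap : ∑ a, ∑ b, (ω a b / 2 * B a c) • σ b = -∑ a, ∑ b, (ω a b / 2 * B b c) • σ a := by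
    rw [Finset.sum_comm]
    simp only [← Finset.sum_neg_distrib, ← neg_smul]
    refine Finset.sum_congr rfl fun a _ => Finset.sum_congr rfl fun b _ => ?_
    rw [hanti b a, neg_div, neg_mul]
  rw [hsplit, hswap, sub_neg_eq_add, ← Finset.sum_add_distrib]
  refine Finset.sum_congr rfl fun a _ => ?_
  rw [Matrix.mul_apply, Finset.sum_smul, ← Finset.sum_add_distrib]
  refine Finset.sum_congr rfl fun b _ => ?_
  rw [← add_smul, div_mul_eq_mul_div, add_halves]

theorem spinRep_mul_bivector_sub (h : IsCliffordPair B σ σ') (hω : ωᵀ = -ω) (c d : ι) :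
    spinRep σ σ' ω * (σ c * σ' d) - σ c * σ' d * spinRep σ σ' ω =
      ∑ a, (ω * B) a c • (σ a * σ' d) + ∑ a, (ω * B) a d • (σ c * σ' a) := by
  have hsplit : spinRep σ σ' ω * (σ c * σ' d) - σ c * σ' d * spinRep σ σ' ω =
      (spinRep σ σ' ω * σ c - σ c * spinRep σ' σ ω) * σ' d +
        σ c * (spinRep σ' σ ω * σ' d - σ' d * spinRep σ σ' ω) := by
    noncomm_ring
  rw [hsplit, h.spinRep_mul_sub_mul hω, h.symm.spinRep_mul_sub_mul hω, Finset.sum_mul,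
    Finset.mul_sum]
  simp only [smul_mul_assoc, mul_smul_comm]

theorem lie_spinRep (h : IsCliffordPair B σ σ') (hB : Bᵀ = B) (hω : ωᵀ = -ω) (ν : Matrix ι ι K) :
    ⁅spinRep σ σ' ω, spinRep σ σ' ν⁆ = spinRep σ σ' (ω * B * ν - ν * B * ω) := by
  have hνBω : ν * B * ω = -(ν * (ω * B)ᵀ) := by
    simp only [Matrix.transpose_mul, hB, hω, Matrix.mul_neg, neg_neg, Matrix.mul_assoc]
  have hexpand : ⁅spinRep σ σ' ω, spinRep σ σ' ν⁆ =
      ∑ c, ∑ d, (ν c d / 4) • (spinRep σ σ' ω * (σ c * σ' d) - σ c * σ' d * spinRep σ σ' ω) := by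
    rw [Ring.lie_def]
    conv_lhs => rw [spinRep_apply σ σ' ν]
    simp only [Finset.mul_sum, Finset.sum_mul, mul_smul_comm, smul_mul_assoc, smul_sub,
      Finset.sum_sub_distrib]
  have hquarter : ∀ c d, ν c d / 4 = ((4 : K)⁻¹ • ν) c d := fun c d => by
    rw [Matrix.smul_apply, smul_eq_mul, div_eq_inv_mul]
  rw [hexpand, hνBω, sub_neg_eq_add, map_add]
  simp only [h.spinRep_mul_bivector_sub hω, smul_add, Finset.sum_add_distrib, hquarter]
  rw [sum_smul_sum_smul_left, sum_smul_sum_smul_right]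
  simp only [spinRep_apply, Matrix.mul_smul, Matrix.smul_mul, Matrix.smul_apply, smul_eq_mul,
    inv_mul_eq_div]

end IsCliffordPair

section SpinLieHom

variable {ι K A : Type*} [Fintype ι] [DecidableEq ι] [Field K] [Ring A] [Algebra K A]
variable {B : Matrix ι ι K}

theorem Matrix.IsSkewAdjoint.transpose_mul_inv (hB : Bᵀ = B) (hBu : IsUnit B.det)
    {M : Matrix ι ι K} (hM : B.IsSkewAdjoint M) : (M * B⁻¹)ᵀ = -(M * B⁻¹) := by
  have hM' : Mᵀ * B = B * -M := hM
  calc (M * B⁻¹)ᵀ = B⁻¹ * (Mᵀ * B) * B⁻¹ := by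
        rw [Matrix.transpose_mul, Matrix.transpose_nonsing_inv, hB, Matrix.mul_assoc,
          Matrix.mul_assoc, Matrix.mul_nonsing_inv _ hBu, Matrix.mul_one]
    _ = -(M * B⁻¹) := by
        rw [hM', ← Matrix.mul_assoc, Matrix.nonsing_inv_mul _ hBu, Matrix.one_mul,
          Matrix.neg_mul]

noncomputable def spinLieHom [NeZero (2 : K)] (hB : Bᵀ = B) (hBu : IsUnit B.det) {σ σ' : ι → A}
    (h : IsCliffordPair B σ σ') : skewAdjointMatricesLieSubalgebra B →ₗ⁅K⁆ A where
  toFun M := spinRep σ σ' (M.1 * B⁻¹)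
  map_add' M N := by rw [← map_add, ← Matrix.add_mul]; rfl
  map_smul' k M := by rw [RingHom.id_apply, ← map_smul, ← Matrix.smul_mul]; rfl
  map_lie' {M N} := by
    have hM : B.IsSkewAdjoint M.1 := (mem_skewAdjointMatricesSubmodule B M.1).mp M.2
    rw [h.lie_spinRep hB (hM.transpose_mul_inv hB hBu)]
    congr 1
    simp only [LieSubalgebra.coe_bracket, Ring.lie_def, Matrix.sub_mul, Matrix.mul_assoc,
      Matrix.nonsing_inv_mul _ hBu, Matrix.one_mul]

end SpinLieHom

section Traces

variable {ι K m R : Type*} [Fintype m] [DecidableEq m] [Field K] [CommRing R] [Algebra K R]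
variable {B : Matrix ι ι K} {σ σ' : ι → Matrix m m R} {ω : Matrix ι ι K}

theorem IsCliffordPair.trace_mul_add_trace_mul (h : IsCliffordPair B σ σ') (X : Matrix m m R)
    (a b : ι) : (X * (σ a * σ' b)).trace + (X * (σ b * σ' a)).trace =
      algebraMap K R (2 * B a b) * X.trace := by
  rw [← Matrix.trace_add, ← Matrix.mul_add, h.mul_add_mul, Matrix.mul_smul, Matrix.mul_one,
    Matrix.trace_smul, Algebra.smul_def]

variable [Fintype ι]

theorem trace_spinRep_eq_zero [NeZero (2 : K)] (hω : ωᵀ = -ω)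
    (htr : ∀ a b, (σ a * σ' b).trace = (σ b * σ' a).trace) : (spinRep σ σ' ω).trace = 0 := by
  have h := sum_smul_eq_zero_of_transpose_eq_neg hω
    (x := fun a b => (4 : K)⁻¹ • (σ a * σ' b).trace) fun a b => by rw [htr]
  rw [spinRep_apply, Matrix.trace_sum, ← h]
  refine Finset.sum_congr rfl fun a _ => ?_
  rw [Matrix.trace_sum]
  refine Finset.sum_congr rfl fun b _ => ?_
  rw [Matrix.trace_smul, smul_smul, div_eq_mul_inv]

theorem trace_spinRep_mul [NeZero (2 : K)] (hB : Bᵀ = B) (hω : ωᵀ = -ω)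
    (htr : ∀ a b c d, (σ a * σ' b * σ c * σ' d).trace =
      algebraMap K R (4 * (B a b * B c d - B a c * B b d + B a d * B b c)))
    (a b : ι) : (spinRep σ σ' ω * (σ b * σ' a)).trace = algebraMap K R (2 * (B * ω * B) a b) := by
  have h4 : (4 : K) ≠ 0 := by
    rw [show (4 : K) = 2 * 2 by norm_num]
    exact mul_ne_zero two_ne_zero two_ne_zero
  rw [← sum_antisymm_mul_pairings hB hω, spinRep_apply, Finset.sum_mul, Matrix.trace_sum, map_sum]
  refine Finset.sum_congr rfl fun c _ => ?_
  rw [Finset.sum_mul, Matrix.trace_sum, map_sum]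
  refine Finset.sum_congr rfl fun d _ => ?_
  rw [smul_mul_assoc, Matrix.trace_smul, ← Matrix.mul_assoc, htr, Algebra.smul_def, ← map_mul]
  congr 1
  field_simp

end Traces

section Hermitian

variable {ι m : Type*} [Fintype m] [DecidableEq m] {H : Matrix m m ℂ}

theorem IsCliffordPair.star_trace_mul {B : Matrix ι ι ℝ} (hH : Hᴴ = H) (hHH : H * H = 1)
    {σ : ι → Matrix m m ℂ} (h : IsCliffordPair B σ fun a => H * (σ a)ᴴ * H)
    {X : Matrix m m ℂ} (htr : X.trace = 0) (hX : Xᴴ * H + H * X = 0) (a b : ι) :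
    star (X * (σ b * (H * (σ a)ᴴ * H))).trace = (X * (σ b * (H * (σ a)ᴴ * H))).trace := by
  have hXH : Xᴴ = -(H * X * H) := by
    calc Xᴴ = Xᴴ * H * H := by rw [Matrix.mul_assoc, hHH, Matrix.mul_one]
      _ = -(H * X * H) := by rw [eq_neg_of_add_eq_zero_left hX, Matrix.neg_mul]
  have hsum := h.trace_mul_add_trace_mul X a b
  rw [htr, mul_zero] at hsum
  have hadj : (X * (σ b * (H * (σ a)ᴴ * H)))ᴴ =
      -(H * (σ a * (H * (σ b)ᴴ * H) * X * H)) := by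
    simp only [Matrix.conjTranspose_mul, hH, Matrix.conjTranspose_conjTranspose, hXH,
      Matrix.mul_neg, Matrix.mul_assoc]
  rw [← Matrix.trace_conjTranspose, hadj, Matrix.trace_neg, Matrix.trace_mul_comm H,
    Matrix.mul_assoc _ H H, hHH, Matrix.mul_one, Matrix.trace_mul_comm,
    ← eq_neg_of_add_eq_zero_right hsum]

variable [Fintype ι]

theorem spinRep_conjTranspose_mul_add_mul (hH : Hᴴ = H) (σ : ι → Matrix m m ℂ)
    {ω : Matrix ι ι ℝ} (hω : ωᵀ = -ω) :
    (spinRep σ (fun a => H * (σ a)ᴴ * H) ω)ᴴ * H + H * spinRep σ (fun a => H * (σ a)ᴴ * H) ω =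
      0 := by
  have h := sum_smul_eq_zero_of_transpose_eq_neg hω
    (x := fun a b => (4 : ℝ)⁻¹ • (H * σ b * H * (σ a)ᴴ * H + H * σ a * H * (σ b)ᴴ * H))
    fun a b => by rw [add_comm]
  rw [spinRep_apply, Matrix.conjTranspose_sum, Finset.sum_mul, Finset.mul_sum,
    ← Finset.sum_add_distrib, ← h]
  refine Finset.sum_congr rfl fun a _ => ?_
  rw [Matrix.conjTranspose_sum, Finset.sum_mul, Finset.mul_sum, ← Finset.sum_add_distrib]
  refine Finset.sum_congr rfl fun b _ => ?_
  simp only [Matrix.conjTranspose_smul, star_trivial, Matrix.conjTranspose_mul, hH,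
    Matrix.conjTranspose_conjTranspose, Matrix.smul_mul, Matrix.mul_smul, ← smul_add, smul_smul,
    div_eq_mul_inv, Matrix.mul_assoc]

end Hermitian

section ConformalSigma

-- Gaussian-integer entries make the identities below decidable by evaluation.
def gaussSigma : Fin 6 → Matrix (Fin 4) (Fin 4) GaussianInt :=
  ![1,
    !![⟨0, 1⟩, 0, 0, 0; 0, ⟨0, -1⟩, 0, 0; 0, 0, ⟨0, 1⟩, 0; 0, 0, 0, ⟨0, -1⟩],
    !![0, 1, 0, 0; -1, 0, 0, 0; 0, 0, 0, 1; 0, 0, -1, 0],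
    !![0, ⟨0, 1⟩, 0, 0; ⟨0, 1⟩, 0, 0, 0; 0, 0, 0, ⟨0, -1⟩; 0, 0, ⟨0, -1⟩, 0],
    !![0, 0, 0, 1; 0, 0, 1, 0; 0, 1, 0, 0; 1, 0, 0, 0],
    !![0, 0, 0, ⟨0, 1⟩; 0, 0, ⟨0, 1⟩, 0; 0, ⟨0, -1⟩, 0, 0; ⟨0, -1⟩, 0, 0, 0]]

def gaussH : Matrix (Fin 4) (Fin 4) GaussianInt := Matrix.diagonal ![1, 1, -1, -1]

def gaussSigmaBar (a : Fin 6) : Matrix (Fin 4) (Fin 4) GaussianInt :=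
  gaussH * (gaussSigma a)ᴴ * gaussH

def gaussEta : Matrix (Fin 6) (Fin 6) ℤ := Matrix.diagonal ![1, 1, 1, 1, -1, -1]

theorem gaussSigma_mul_add_mul : ∀ a b,
    gaussSigma a * gaussSigmaBar b + gaussSigma b * gaussSigmaBar a = (2 * gaussEta a b) • 1 := by
  decide

theorem gaussSigmaBar_mul_add_mul : ∀ a b,
    gaussSigmaBar a * gaussSigma b + gaussSigmaBar b * gaussSigma a = (2 * gaussEta a b) • 1 := by
  decide

theorem trace_gaussSigma_mul_gaussSigmaBar_comm : ∀ a b,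
    (gaussSigma a * gaussSigmaBar b).trace = (gaussSigma b * gaussSigmaBar a).trace := by
  decide

theorem trace_gaussSigma_mul_gaussSigmaBar_mul_mul : ∀ a b c d,
    (gaussSigma a * gaussSigmaBar b * gaussSigma c * gaussSigmaBar d).trace =
      ((4 * (gaussEta a b * gaussEta c d - gaussEta a c * gaussEta b d +
        gaussEta a d * gaussEta b c) : ℤ) : GaussianInt) := by
  decide +kernel

theorem gaussSigma_fierz : ∀ i j k l : Fin 4,
    ∑ a, ∑ b, ((gaussEta a a * gaussEta b b : ℤ) : GaussianInt) *
      (gaussSigma b * gaussSigmaBar a) l k * (gaussSigma a * gaussSigmaBar b) i j =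
      8 * (1 : Matrix (Fin 4) (Fin 4) GaussianInt) i k *
          (1 : Matrix (Fin 4) (Fin 4) GaussianInt) j l +
        4 * (1 : Matrix (Fin 4) (Fin 4) GaussianInt) k l *
          (1 : Matrix (Fin 4) (Fin 4) GaussianInt) i j := by
  decide +kernel

noncomputable def conformalSigma (a : Fin 6) : Matrix (Fin 4) (Fin 4) ℂ :=
  GaussianInt.toComplex.mapMatrix (gaussSigma a)

noncomputable def conformalSigmaBar (a : Fin 6) : Matrix (Fin 4) (Fin 4) ℂ :=
  H4 * (conformalSigma a)ᴴ * H4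

theorem eta6_eq_map : eta6 = gaussEta.map (Int.cast) := by
  rw [eta6, gaussEta, Matrix.diagonal_map Int.cast_zero]
  congr 1
  ext i
  fin_cases i <;> simp

theorem conformalSigmaBar_eq_map (a : Fin 6) :
    conformalSigmaBar a = GaussianInt.toComplex.mapMatrix (gaussSigmaBar a) := by
  have hH : GaussianInt.toComplex.mapMatrix gaussH = H4 := by
    rw [RingHom.mapMatrix_apply, gaussH, H4, Matrix.diagonal_map (map_zero _)]
    congr 1
    ext i
    fin_cases i <;> simp
  rw [gaussSigmaBar, map_mul, map_mul, hH, conformalSigmaBar, conformalSigma,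
    RingHom.mapMatrix_apply, RingHom.mapMatrix_apply,
    Matrix.conjTranspose_map _ fun x => GaussianInt.toComplex_star x]

theorem conformalSigma_mul_conformalSigmaBar (a b : Fin 6) :
    conformalSigma a * conformalSigmaBar b =
      GaussianInt.toComplex.mapMatrix (gaussSigma a * gaussSigmaBar b) := by
  rw [conformalSigma, conformalSigmaBar_eq_map, map_mul]

theorem isCliffordPair_conformalSigma :
    IsCliffordPair eta6 conformalSigma conformalSigmaBar := by
  have hcast : ∀ a b, GaussianInt.toComplex.mapMatrix
      ((2 * gaussEta a b) • (1 : Matrix (Fin 4) (Fin 4) GaussianInt)) = (2 * eta6 a b) • 1 := by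
    intro a b
    rw [map_zsmul, map_one, eta6_eq_map, Matrix.map_apply, ← Int.cast_smul_eq_zsmul ℝ]
    push_cast
    rfl
  constructor <;> intro a b <;>
    simp only [conformalSigma, conformalSigmaBar_eq_map, ← map_mul, ← map_add,
      gaussSigma_mul_add_mul, gaussSigmaBar_mul_add_mul, hcast]

theorem trace_conformalSigma_mul_conformalSigmaBar_comm (a b : Fin 6) :
    (conformalSigma a * conformalSigmaBar b).trace =
      (conformalSigma b * conformalSigmaBar a).trace := by
  rw [conformalSigma_mul_conformalSigmaBar, conformalSigma_mul_conformalSigmaBar,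
    RingHom.mapMatrix_apply, RingHom.mapMatrix_apply, ← AddMonoidHom.map_trace,
    ← AddMonoidHom.map_trace, trace_gaussSigma_mul_gaussSigmaBar_comm]

theorem trace_conformalSigma_mul_conformalSigmaBar_mul_mul (a b c d : Fin 6) :
    (conformalSigma a * conformalSigmaBar b * conformalSigma c * conformalSigmaBar d).trace =
      algebraMap ℝ ℂ (4 * (eta6 a b * eta6 c d - eta6 a c * eta6 b d + eta6 a d * eta6 b c)) := by
  rw [Matrix.mul_assoc _ (conformalSigma c), conformalSigma_mul_conformalSigmaBar,
    conformalSigma_mul_conformalSigmaBar, ← map_mul, ← Matrix.mul_assoc, RingHom.mapMatrix_apply,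
    ← AddMonoidHom.map_trace, trace_gaussSigma_mul_gaussSigmaBar_mul_mul, map_intCast, eta6_eq_map]
  simp only [Matrix.map_apply]
  push_cast
  rfl

theorem conformalSigma_fierz_apply (i j k l : Fin 4) :
    ∑ a, ∑ b, ((eta6 a a * eta6 b b : ℝ) : ℂ) *
      (conformalSigma b * conformalSigmaBar a) l k * (conformalSigma a * conformalSigmaBar b) i j =
      8 * (1 : Matrix (Fin 4) (Fin 4) ℂ) i k * (1 : Matrix (Fin 4) (Fin 4) ℂ) j l +
        4 * (1 : Matrix (Fin 4) (Fin 4) ℂ) k l * (1 : Matrix (Fin 4) (Fin 4) ℂ) i j := by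
  have h1 : ∀ i k, GaussianInt.toComplex ((1 : Matrix (Fin 4) (Fin 4) GaussianInt) i k) =
      (1 : Matrix (Fin 4) (Fin 4) ℂ) i k := fun i k => by
    rw [← map_one GaussianInt.toComplex.mapMatrix]; rfl
  have := congrArg GaussianInt.toComplex (gaussSigma_fierz i j k l)
  simp only [map_sum, map_mul, map_add, map_intCast, map_ofNat, h1] at this
  simp only [conformalSigma_mul_conformalSigmaBar, RingHom.mapMatrix_apply, Matrix.map_apply,
    eta6_eq_map, ← this]
  push_cast
  rfl

theorem conformalSigma_fierz (X : Matrix (Fin 4) (Fin 4) ℂ) :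
    ∑ a, ∑ b, ((eta6 a a * eta6 b b : ℝ) * (X * (conformalSigma b * conformalSigmaBar a)).trace) •
      (conformalSigma a * conformalSigmaBar b) = (8 : ℂ) • X + (4 * X.trace) • 1 := by
  have htr : ∀ a b, (X * (conformalSigma b * conformalSigmaBar a)).trace =
      ∑ k, ∑ l, X k l * (conformalSigma b * conformalSigmaBar a) l k := fun a b => by
    simp only [Matrix.trace, Matrix.diag_apply, Matrix.mul_apply]
  ext i j
  calc _ = ∑ a, ∑ b, ∑ k, ∑ l, X k l * (((eta6 a a * eta6 b b : ℝ) : ℂ) *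
        (conformalSigma b * conformalSigmaBar a) l k *
          (conformalSigma a * conformalSigmaBar b) i j) := by
        simp only [Matrix.sum_apply, Matrix.smul_apply, smul_eq_mul, htr, Finset.mul_sum,
          Finset.sum_mul]
        refine Finset.sum_congr rfl fun a _ => Finset.sum_congr rfl fun b _ =>
          Finset.sum_congr rfl fun k _ => Finset.sum_congr rfl fun l _ => ?_
        ring
    _ = ∑ k, ∑ l, X k l * ∑ a, ∑ b, ((eta6 a a * eta6 b b : ℝ) : ℂ) *
        (conformalSigma b * conformalSigmaBar a) l k *
          (conformalSigma a * conformalSigmaBar b) i j := by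
        simp only [Finset.mul_sum]
        exact (Finset.sum_congr rfl fun a _ => Finset.sum_comm.trans
          (Finset.sum_congr rfl fun k _ => Finset.sum_comm)).trans
            (Finset.sum_comm.trans (Finset.sum_congr rfl fun k _ => Finset.sum_comm))
    _ = ∑ k, ∑ l, X k l * (8 * (1 : Matrix (Fin 4) (Fin 4) ℂ) i k *
        (1 : Matrix (Fin 4) (Fin 4) ℂ) j l + 4 * (1 : Matrix (Fin 4) (Fin 4) ℂ) k l *
          (1 : Matrix (Fin 4) (Fin 4) ℂ) i j) := by
        simp only [conformalSigma_fierz_apply]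
    _ = ((8 : ℂ) • X + (4 * X.trace) • 1) i j := by
        simp [Matrix.one_apply, mul_add, Finset.sum_add_distrib, Matrix.trace]
        split_ifs <;> simp only [← Finset.sum_mul, add_zero] <;> ring

end ConformalSigma

section Isomorphism

theorem eta6_transpose : eta6ᵀ = eta6 := Matrix.diagonal_transpose _

theorem eta6_mul_eta6 : eta6 * eta6 = 1 := by
  rw [eta6, Matrix.diagonal_mul_diagonal, ← Matrix.diagonal_one]
  congr 1
  ext i
  fin_cases i <;> norm_num

theorem eta6_inv : eta6⁻¹ = eta6 := Matrix.inv_eq_left_inv eta6_mul_eta6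

theorem isUnit_det_eta6 : IsUnit eta6.det := Matrix.isUnit_det_of_left_inverse eta6_mul_eta6

theorem H4_conjTranspose : H4ᴴ = H4 := by
  rw [H4, Matrix.diagonal_conjTranspose]
  congr 1
  ext i
  fin_cases i <;> simp

theorem spinRep_conformalSigma_mem_su22 {ω : Matrix (Fin 6) (Fin 6) ℝ} (hω : ωᵀ = -ω) :
    spinRep conformalSigma conformalSigmaBar ω ∈ su22 :=
  ⟨trace_spinRep_eq_zero hω trace_conformalSigma_mul_conformalSigmaBar_comm,
    spinRep_conjTranspose_mul_add_mul H4_conjTranspose conformalSigma hω⟩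

noncomputable def soToSu : skewAdjointMatricesLieSubalgebra eta6 →ₗ⁅ℝ⁆ su22 :=
  let f := spinLieHom eta6_transpose isUnit_det_eta6 isCliffordPair_conformalSigma
  { toFun M := ⟨f M, spinRep_conformalSigma_mem_su22
      (((mem_skewAdjointMatricesSubmodule _ _).mp M.2).transpose_mul_inv eta6_transpose
        isUnit_det_eta6)⟩
    map_add' M N := Subtype.ext (map_add f M N)
    map_smul' r M := Subtype.ext (map_smul f r M)
    map_lie' {M N} := Subtype.ext (LieHom.map_lie f M N) }

noncomputable def sigmaTraceMatrix (X : Matrix (Fin 4) (Fin 4) ℂ) : Matrix (Fin 6) (Fin 6) ℝ :=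
  Matrix.of fun a b => (X * (conformalSigma b * conformalSigmaBar a)).trace.re

noncomputable def suToSo (X : Matrix (Fin 4) (Fin 4) ℂ) : Matrix (Fin 6) (Fin 6) ℝ :=
  (2 : ℝ)⁻¹ • (eta6 * sigmaTraceMatrix X)

theorem suToSo_mem {X : Matrix (Fin 4) (Fin 4) ℂ} (htr : X.trace = 0) :
    suToSo X ∈ skewAdjointMatricesLieSubalgebra eta6 := by
  have hR : (sigmaTraceMatrix X)ᵀ = -sigmaTraceMatrix X := by
    ext a b
    have := isCliffordPair_conformalSigma.trace_mul_add_trace_mul X a b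
    rw [htr, mul_zero] at this
    simp only [sigmaTraceMatrix, Matrix.transpose_apply, Matrix.neg_apply, Matrix.of_apply,
      eq_neg_of_add_eq_zero_left this, Complex.neg_re]
  rw [mem_skewAdjointMatricesLieSubalgebra, mem_skewAdjointMatricesSubmodule]
  show (suToSo X)ᵀ * eta6 = eta6 * -suToSo X
  simp only [suToSo, Matrix.transpose_smul, Matrix.transpose_mul, hR, eta6_transpose,
    Matrix.smul_mul, Matrix.mul_smul, Matrix.neg_mul, Matrix.mul_neg, Matrix.mul_assoc,
    ← Matrix.mul_assoc eta6 eta6, eta6_mul_eta6, Matrix.mul_one, Matrix.one_mul, smul_neg]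

theorem suToSo_spinRep {M : Matrix (Fin 6) (Fin 6) ℝ} (hM : eta6.IsSkewAdjoint M) :
    suToSo (spinRep conformalSigma conformalSigmaBar (M * eta6⁻¹)) = M := by
  have hω := hM.transpose_mul_inv eta6_transpose isUnit_det_eta6
  have hR : sigmaTraceMatrix (spinRep conformalSigma conformalSigmaBar (M * eta6⁻¹)) =
      (2 : ℝ) • (eta6 * M) := by
    ext a b
    have hηMη : eta6 * (M * eta6⁻¹) * eta6 = eta6 * M := by
      rw [eta6_inv, Matrix.mul_assoc, Matrix.mul_assoc, eta6_mul_eta6, Matrix.mul_one]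
    rw [sigmaTraceMatrix, Matrix.of_apply, trace_spinRep_mul eta6_transpose hω
      trace_conformalSigma_mul_conformalSigmaBar_mul_mul, hηMη, Complex.coe_algebraMap,
      Complex.ofReal_re]
    rfl
  rw [suToSo, hR, Matrix.mul_smul, ← Matrix.mul_assoc, eta6_mul_eta6, Matrix.one_mul, smul_smul,
    inv_mul_cancel₀ two_ne_zero, one_smul]

theorem spinRep_suToSo {X : Matrix (Fin 4) (Fin 4) ℂ} (hX : X ∈ su22) :
    spinRep conformalSigma conformalSigmaBar (suToSo X * eta6⁻¹) = X := by
  obtain ⟨htr, hH⟩ := hX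
  have hreal : ∀ a b, (((X * (conformalSigma b * conformalSigmaBar a)).trace.re : ℝ) : ℂ) =
      (X * (conformalSigma b * conformalSigmaBar a)).trace := fun a b =>
    Complex.conj_eq_iff_re.mp
      (isCliffordPair_conformalSigma.star_trace_mul (H := H4) H4_conjTranspose H4_mul_H4 htr hH a b)
  have hω : ∀ a b, (suToSo X * eta6⁻¹) a b =
      eta6 a a * eta6 b b * (X * (conformalSigma b * conformalSigmaBar a)).trace.re / 2 := by
    intro a b
    rw [eta6_inv, suToSo, Matrix.smul_mul, Matrix.smul_apply, eta6]
    simp only [Matrix.diagonal_mul, Matrix.mul_diagonal, Matrix.diagonal_apply_eq, sigmaTraceMatrix,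
      Matrix.of_apply, smul_eq_mul]
    ring
  calc spinRep conformalSigma conformalSigmaBar (suToSo X * eta6⁻¹)
      = (8 : ℂ)⁻¹ • ∑ a, ∑ b, ((eta6 a a * eta6 b b : ℝ) *
          (X * (conformalSigma b * conformalSigmaBar a)).trace) •
          (conformalSigma a * conformalSigmaBar b) := by
        rw [spinRep_apply, Finset.smul_sum]
        refine Finset.sum_congr rfl fun a _ => ?_
        rw [Finset.smul_sum]
        refine Finset.sum_congr rfl fun b _ => ?_
        rw [hω, smul_smul, ← Complex.coe_smul]
        congr 1
        conv_rhs => rw [← hreal]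
        push_cast
        ring
    _ = X := by
        rw [conformalSigma_fierz, htr, mul_zero, zero_smul, add_zero, smul_smul,
          inv_mul_cancel₀ (by norm_num), one_smul]

noncomputable def soEquivSu : skewAdjointMatricesLieSubalgebra eta6 ≃ₗ⁅ℝ⁆ su22 :=
  { soToSu with
    invFun X := ⟨suToSo X.1, suToSo_mem X.2.1⟩
    left_inv M := Subtype.ext (suToSo_spinRep ((mem_skewAdjointMatricesSubmodule _ _).mp M.2))
    right_inv X := Subtype.ext (spinRep_suToSo X.2) }

end Isomorphism

/-- the real Lie algebra so(4,2) = {M ∈ M₆(ℝ) : Mᵀη + ηM = 0},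
η = diag(1,1,1,1,−1,−1), is isomorphic as a real Lie algebra to su(2,2). -/
theorem stmt13 :
    Nonempty ((skewAdjointMatricesLieSubalgebra eta6) ≃ₗ⁅ℝ⁆ su22) :=
  ⟨soEquivSu⟩
end
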